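/- Let α be real and κ > 0, C_p, τ real. If ω, δ are real numbers such that, for symmetric CLMs with N1 = N2 = N, iω - (1+iα)N = ±κ e^{-i(C_p+ωτ)} e^{∓iδ} with δ ∈ {0, π}, then ω^2/(κ^2(1+α^2)) = sin^2(C_p + ωτ + arctan α) - sin^2 δ. -/

import Mathlib

open Complex

/-- The implicit frequency equation (Eq. 4 of the paper) for symmetric compound
laser modes: `ω²/(κ²(1+α²)) = sin²(C_p + ωτ + arctan α) - sin² δ`. -/
theorem CLM_frequency_equation
    (α κ Cp τ ω δ N : ℝ) (hκ : 0 < κ)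
    (hδ : δ = 0 ∨ δ = Real.pi)
    (h : ∃ s : ℝ, (s = 1 ∨ s = -1) ∧
      I * ω - (1 + I * α) * N =
        s * κ * exp (-I * (Cp + ω * τ)) * exp (-(s : ℂ) * I * δ)) :
    ω^2 / (κ^2 * (1 + α^2)) =
      Real.sin (Cp + ω * τ + Real.arctan α)^2 - Real.sin δ^2 := by
  obtain ⟨s, hs, heq⟩ := h
  set θ := Cp + ω * τ with hθ
  have hsδ : Real.sin δ = 0 := by rcases hδ with rfl | rfl <;> simp
  have hc2 : Real.cos δ ^ 2 = 1 := by rcases hδ with rfl | rfl <;> simp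
  have hE1 : exp (-I * ((Cp:ℂ) + ω * τ)) = (Real.cos θ : ℂ) - (Real.sin θ : ℂ) * I := by
    have e : -I * ((Cp:ℂ) + ω * τ) = ((-θ : ℝ) : ℂ) * I := by rw [hθ]; push_cast; ring
    rw [e, Complex.exp_mul_I, ← Complex.ofReal_cos, ← Complex.ofReal_sin,
      Real.cos_neg, Real.sin_neg]
    push_cast; ring
  have hE2 : exp (-(s:ℂ) * I * δ) = (Real.cos δ : ℂ) := by
    have e : -(s:ℂ) * I * δ = ((-(s*δ) : ℝ) : ℂ) * I := by push_cast; ring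
    rw [e, Complex.exp_mul_I, ← Complex.ofReal_cos, ← Complex.ofReal_sin]
    rcases hs with rfl | rfl <;> simp [hsδ]
  rw [hE1, hE2] at heq
  have hre := congrArg Complex.re heq
  have him := congrArg Complex.im heq
  simp only [Complex.mul_re, Complex.mul_im, Complex.sub_re, Complex.sub_im, Complex.add_re,
    Complex.add_im, Complex.one_re, Complex.one_im, Complex.I_re, Complex.I_im,
    Complex.ofReal_re, Complex.ofReal_im, mul_zero, zero_mul, mul_one, one_mul,
    sub_zero, zero_sub, add_zero, zero_add, neg_zero, neg_neg] at hre him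
  have hs2 : s^2 = 1 := by rcases hs with rfl | rfl <;> norm_num
  have hS : Real.sqrt (1+α^2) ^ 2 = 1 + α^2 := Real.sq_sqrt (by positivity)
  have hSpos : 0 < Real.sqrt (1+α^2) := Real.sqrt_pos.2 (by positivity)
  have hω : ω = -(s * Real.cos δ * κ * (Real.sin θ + α * Real.cos θ)) := by
    linear_combination him - α * hre
  rw [hsδ, Real.sin_add, Real.sin_arctan, Real.cos_arctan]
  field_simp
  rw [hω]
  have h12 : s^2 * Real.cos δ ^ 2 = 1 := by rw [hs2, one_mul, hc2]
  linear_combination (κ^2 * (1 + α^2) * (Real.sin θ + α * Real.cos θ)^2) * h12 + (s^2 * Real.cos δ ^ 2 * κ^2 * (Real.sin θ + α * Real.cos θ)^2) * hS
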